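/- arXiv:1011.1587 — 3 statements merged into one kernel-verified Lean document; each statement's English description precedes it below -/
import Mathlib

section
/- For all u, v ∈ M the identity e_u e_v = γ(T u, v)^{-1} e_0 e_{T u + v} holds in Adj(A(M,T)). -/
/-!
Common setup: the adjoint group of the Alexander quandle `A(M,T)` (F.J.-B.J. Clauwens,
"The adjoint group of an Alexander quandle").

For an abelian group `M` with automorphism `T`, the Alexander quandle `A(M,T)` is `M` with
`y * x = T y + x - T x`, and the adjoint group `Adj(A(M,T))` is presented with generators
`e x` for `x : M` and relations `e (y * x) = (e x)⁻¹ * e y * e x`.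
-/

open scoped TensorProduct

namespace Clauwens

variable {M : Type*} [AddCommGroup M]

/-- The relations of the adjoint group of the Alexander quandle `A(M,T)`:
for each `x y : M`, the relation `e_{y*x} = e_x⁻¹ * e_y * e_x`, where `y*x = T y + x - T x`. -/
def rels (T : M ≃+ M) : Set (FreeGroup M) :=
  {r | ∃ x y : M, r = FreeGroup.of (T y + x - T x) *
      ((FreeGroup.of x)⁻¹ * FreeGroup.of y * FreeGroup.of x)⁻¹}

/-- The adjoint group `Adj(A(M,T))` of the Alexander quandle. -/
abbrev Adj (T : M ≃+ M) : Type _ := PresentedGroup (rels T)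

/-- The generator `e_x` of the adjoint group. -/
def e (T : M ≃+ M) (x : M) : Adj T := PresentedGroup.of x

/-- The quandle automorphism `p ↦ p * x = T p + x - T x` of `A(M,T)`. -/
def σ (T : M ≃+ M) (x : M) : Equiv.Perm M where
  toFun p := T p + (x - T x)
  invFun p := T.symm (p - (x - T x))
  left_inv p := by simp
  right_inv p := by simp

lemma σ_apply (T : M ≃+ M) (x p : M) : σ T x p = T p + (x - T x) := rfl

lemma σ_inv_apply (T : M ≃+ M) (x p : M) : (σ T x)⁻¹ p = T.symm (p - (x - T x)) := rfl

lemma σ_rel (T : M ≃+ M) (x y : M) :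
    σ T x * σ T y * (σ T x)⁻¹ = σ T (T y + x - T x) := by
  ext p
  simp only [Equiv.Perm.mul_apply, σ_apply, σ_inv_apply, map_add, map_sub,
    AddEquiv.apply_symm_apply]
  abel

/-- The homomorphism `ρ` from the adjoint group to the group of quandle automorphisms of
`A(M,T)` acting on the right of `M` (hence the `ᵐᵒᵖ`), induced by the right action
`p · e_x = p * x = T p + x - T x`; the automorphism by which `g` acts is `(ρ T g).unop`. -/
def ρ (T : M ≃+ M) : Adj T →* (Equiv.Perm M)ᵐᵒᵖ :=
  PresentedGroup.toGroup (f := fun x => MulOpposite.op (σ T x)) (by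
    rintro r ⟨x, y, rfl⟩
    simp only [map_mul, map_inv, FreeGroup.lift_apply_of, ← MulOpposite.op_inv, ← MulOpposite.op_mul,
      mul_inv_rev, inv_inv]
    rw [MulOpposite.op_eq_one_iff, ← σ_rel T x y]
    group)

/-- `γ(x,y) = e_0⁻¹ e_{x+y} e_y⁻¹ e_0 e_x⁻¹ e_0`, so that
`e_0⁻¹ e_{x+y} = γ(x,y) e_0⁻¹ e_x e_0⁻¹ e_y`. -/
def γ (T : M ≃+ M) (x y : M) : Adj T :=
  (e T 0)⁻¹ * e T (x + y) * (e T y)⁻¹ * e T 0 * (e T x)⁻¹ * e T 0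

/-- `λ(x,y) = γ(y,x)⁻¹ γ(x,y)`. -/
def lam (T : M ≃+ M) (x y : M) : Adj T := (γ T y x)⁻¹ * γ T x y

/-- The additive endomorphism `τ` of `M ⊗_ℤ M` with `τ(x ⊗ y) = T y ⊗ x`. -/
noncomputable def τmap (T : M ≃+ M) : M ⊗[ℤ] M →ₗ[ℤ] M ⊗[ℤ] M :=
  (TensorProduct.comm ℤ M M).toLinearMap ∘ₗ
    (LinearMap.lTensor M T.toAddMonoidHom.toIntLinearMap)

lemma τmap_tmul (T : M ≃+ M) (x y : M) : τmap T (x ⊗ₜ[ℤ] y) = T y ⊗ₜ[ℤ] x := rfl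

/-- `S(M,T) = coker(1 - τ) = (M ⊗_ℤ M)/im(1 - τ)`. -/
abbrev S (T : M ≃+ M) : Type _ :=
  (M ⊗[ℤ] M) ⧸ LinearMap.range (LinearMap.id - τmap T)

/-- The class `[x ⊗ y]` in `S(M,T)`. -/
noncomputable def cls (T : M ≃+ M) (x y : M) : S T := Submodule.Quotient.mk (x ⊗ₜ[ℤ] y)

lemma mk_τmap (T : M ≃+ M) (w : M ⊗[ℤ] M) :
    (Submodule.Quotient.mk (τmap T w) : S T) = Submodule.Quotient.mk w := by
  rw [Submodule.Quotient.eq]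
  exact ⟨-w, by simp [LinearMap.sub_apply]; abel⟩

lemma cls_T (T : M ≃+ M) (x y : M) : cls T (T x) (T y) = cls T x y := by
  have h1 : cls T (T x) (T y) = Submodule.Quotient.mk (τmap T (T y ⊗ₜ[ℤ] x)) := rfl
  have h2 : (Submodule.Quotient.mk (T y ⊗ₜ[ℤ] x) : S T)
      = Submodule.Quotient.mk (τmap T (x ⊗ₜ[ℤ] y)) := rfl
  rw [h1, mk_τmap, h2, mk_τmap]; rfl

lemma cls_add_left (T : M ≃+ M) (x x' y : M) :
    cls T (x + x') y = cls T x y + cls T x' y := by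
  simp only [cls, ← Submodule.Quotient.mk_add, TensorProduct.add_tmul]

lemma cls_add_right (T : M ≃+ M) (x y y' : M) :
    cls T x (y + y') = cls T x y + cls T x y' := by
  simp only [cls, ← Submodule.Quotient.mk_add, TensorProduct.tmul_add]

lemma cls_neg_left (T : M ≃+ M) (x y : M) : cls T (-x) y = -cls T x y := by
  simp only [cls, ← Submodule.Quotient.mk_neg, TensorProduct.neg_tmul]

lemma cls_zero_left (T : M ≃+ M) (y : M) : cls T 0 y = 0 := by
  simp [cls, TensorProduct.zero_tmul]

lemma cls_zero_right (T : M ≃+ M) (x : M) : cls T x 0 = 0 := by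
  simp [cls, TensorProduct.tmul_zero]

/-- `T^m` for `m : ℤ`. -/
def Tz (T : M ≃+ M) (m : ℤ) : M ≃+ M := (m • T : AddAut M)

lemma Tz_zero (T : M ≃+ M) (x : M) : Tz T 0 x = x := rfl

lemma Tz_one (T : M ≃+ M) (x : M) : Tz T 1 x = T x := by simp [Tz]

lemma Tz_add (T : M ≃+ M) (m n : ℤ) (x : M) : Tz T (m + n) x = Tz T m (Tz T n x) := by
  simp [Tz, add_zsmul, AddAut.add_apply]

lemma cls_Tz_shift (T : M ≃+ M) (m : ℤ) (x y : M) :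
    cls T (Tz T (m + 1) x) (Tz T (m + 1) y) = cls T (Tz T m x) (Tz T m y) := by
  have h : ∀ z : M, Tz T (m + 1) z = T (Tz T m z) := by
    intro z; rw [add_comm, Tz_add, Tz_one]
  rw [h, h, cls_T]

lemma cls_Tz (T : M ≃+ M) (m : ℤ) (x y : M) :
    cls T (Tz T m x) (Tz T m y) = cls T x y := by
  induction m using Int.induction_on with
  | zero => rfl
  | succ i ih => rw [cls_Tz_shift, ih]
  | pred i ih =>
      have h := cls_Tz_shift T (-(i : ℤ) - 1) x y
      rw [sub_add_cancel] at h
      rw [← h, ih]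

/-- `F(M,T)` is the set `ℤ × M × S(M,T)` equipped with the multiplication
`(k, x, α)(m, y, β) = (k + m, T^m x + y, α + β + [T^m x ⊗ y])`. -/
abbrev F (T : M ≃+ M) : Type _ := ℤ × M × S T

noncomputable instance (T : M ≃+ M) : Group (F T) where
  mul g h := (g.1 + h.1, Tz T h.1 g.2.1 + h.2.1, g.2.2 + h.2.2 + cls T (Tz T h.1 g.2.1) h.2.1)
  one := ((0 : ℤ), (0 : M), (0 : S T))
  inv g := (-g.1, -(Tz T (-g.1) g.2.1), -g.2.2 + cls T g.2.1 g.2.1)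
  mul_assoc g h k := by
    obtain ⟨a, x, α⟩ := g; obtain ⟨b, y, β⟩ := h; obtain ⟨c, z, δ⟩ := k
    refine Prod.ext (add_assoc a b c) (Prod.ext ?_ ?_)
    · show Tz T c (Tz T b x + y) + z = Tz T (b + c) x + (Tz T c y + z)
      rw [add_comm b c, Tz_add, map_add]
      abel
    · show α + β + cls T (Tz T b x) y + δ + cls T (Tz T c (Tz T b x + y)) z
        = α + (β + δ + cls T (Tz T c y) z) + cls T (Tz T (b + c) x) (Tz T c y + z)
      rw [add_comm b c, Tz_add, map_add, cls_add_left, cls_add_right]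
      have h1 : cls T (Tz T c (Tz T b x)) (Tz T c y) = cls T (Tz T b x) y := cls_Tz T c _ _
      rw [h1]
      abel
  one_mul g := by
    obtain ⟨a, x, α⟩ := g
    refine Prod.ext (zero_add a) (Prod.ext ?_ ?_)
    · show Tz T a 0 + x = x
      rw [map_zero, zero_add]
    · show 0 + α + cls T (Tz T a 0) x = α
      rw [map_zero, cls_zero_left, zero_add, add_zero]
  mul_one g := by
    obtain ⟨a, x, α⟩ := g
    refine Prod.ext (add_zero a) (Prod.ext ?_ ?_)
    · show Tz T 0 x + 0 = x
      rw [Tz_zero, add_zero]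
    · show α + 0 + cls T (Tz T 0 x) 0 = α
      rw [cls_zero_right, add_zero, add_zero]
  inv_mul_cancel g := by
    obtain ⟨a, x, α⟩ := g
    have hx : Tz T a (Tz T (-a) x) = x := by
      rw [← Tz_add, add_neg_cancel, Tz_zero]
    refine Prod.ext (neg_add_cancel a) (Prod.ext ?_ ?_)
    · show Tz T a (-(Tz T (-a) x)) + x = 0
      rw [map_neg, hx, neg_add_cancel]
    · show -α + cls T x x + α + cls T (Tz T a (-(Tz T (-a) x))) x = 0
      rw [map_neg, hx, cls_neg_left]
      abel

/-- The canonical augmentation `ε : Adj(A(M,T)) → ℤ`, with `ε(e_x) = 1` for all `x`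
(written multiplicatively since `Adj` is a multiplicative group). -/
def ε (T : M ≃+ M) : Adj T →* Multiplicative ℤ :=
  PresentedGroup.toGroup (f := fun _ => Multiplicative.ofAdd (1 : ℤ)) (by
    rintro r ⟨x, y, rfl⟩
    simp only [map_mul, map_inv, FreeGroup.lift_apply_of]
    group)

/-- The subgroup `F(M,T)⁰` of elements `(0, x, α)` of `F(M,T)`. -/
noncomputable def Fo (T : M ≃+ M) : Subgroup (F T) where
  carrier := {g | g.1 = 0}
  mul_mem' := by
    rintro ⟨a, x, α⟩ ⟨b, y, β⟩ (ha : a = 0) (hb : b = 0)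
    show a + b = 0
    rw [ha, hb, add_zero]
  one_mem' := rfl
  inv_mem' := by
    rintro ⟨a, x, α⟩ (ha : a = 0)
    show -a = 0
    rw [ha, neg_zero]

/-- The fundamental group `π₁(A(M,T), 0)` of the Alexander quandle based at `0 ∈ M`:
the elements of `ker ε` fixing the base point `0`. -/
def pi1 (T : M ≃+ M) : Subgroup (Adj T) where
  carrier := {g | g ∈ (ε T).ker ∧ (ρ T g).unop 0 = 0}
  one_mem' := ⟨(ε T).ker.one_mem, by simp⟩
  mul_mem' := by
    intro a b ha hb
    refine ⟨(ε T).ker.mul_mem ha.1 hb.1, ?_⟩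
    show ((ρ T) (a * b)).unop 0 = 0
    rw [map_mul, MulOpposite.unop_mul, Equiv.Perm.mul_apply, ha.2, hb.2]
  inv_mem' := by
    intro a ha
    refine ⟨(ε T).ker.inv_mem ha.1, ?_⟩
    show ((ρ T) a⁻¹).unop 0 = 0
    rw [map_inv, MulOpposite.unop_inv]
    exact Equiv.Perm.inv_eq_iff_eq.mpr ha.2.symm


/-!
Both `e_u e_v` and `e_{T u + v}` move the base point `0` to `T u + v - T² u - T v`, so they
conjugate `e_0` to the same generator. Hence `e_0` commutes with `e_u e_v e_{T u + v}⁻¹`, and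
once `e_{T u}` is rewritten as `e_0⁻¹ e_u e_0`, the identity is exactly this commutation.
-/

theorem commute_mul_inv_of_inv_mul_mul_eq {G : Type*} [Group G] {z g h : G}
    (H : g⁻¹ * z * g = h⁻¹ * z * h) : Commute z (g * h⁻¹) :=
  calc z * (g * h⁻¹) = g * (g⁻¹ * z * g) * h⁻¹ := by group
    _ = g * (h⁻¹ * z * h) * h⁻¹ := by rw [H]
    _ = g * h⁻¹ * z := by group

lemma inv_e_mul_e_mul_e (T : M ≃+ M) (x y : M) :
    (e T x)⁻¹ * e T y * e T x = e T (T y + x - T x) := by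
  have h : (QuotientGroup.mk (FreeGroup.of (T y + x - T x) *
      ((FreeGroup.of x)⁻¹ * FreeGroup.of y * FreeGroup.of x)⁻¹) : Adj T) = 1 :=
    (QuotientGroup.eq_one_iff _).mpr (Subgroup.subset_normalClosure ⟨x, y, rfl⟩)
  rw [QuotientGroup.mk_mul, QuotientGroup.mk_inv, mul_inv_eq_one] at h
  exact h.symm

lemma e_T_eq_conj (T : M ≃+ M) (y : M) : e T (T y) = (e T 0)⁻¹ * e T y * e T 0 := by
  simpa using (inv_e_mul_e_mul_e T 0 y).symm

lemma inv_e_mul_e_zero_mul_e (T : M ≃+ M) (x : M) :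
    (e T x)⁻¹ * e T 0 * e T x = e T (x - T x) := by
  simpa using inv_e_mul_e_mul_e T x 0

lemma conj_e_zero_e_mul_e (T : M ≃+ M) (u v : M) :
    (e T u * e T v)⁻¹ * e T 0 * (e T u * e T v) =
      (e T (T u + v))⁻¹ * e T 0 * e T (T u + v) :=
  calc (e T u * e T v)⁻¹ * e T 0 * (e T u * e T v)
        = (e T v)⁻¹ * ((e T u)⁻¹ * e T 0 * e T u) * e T v := by group
    _ = e T (T (u - T u) + v - T v) := by rw [inv_e_mul_e_zero_mul_e, inv_e_mul_e_mul_e]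
    _ = e T (T u + v - T (T u + v)) := by congr 1; simp only [map_add, map_sub]; abel
    _ = (e T (T u + v))⁻¹ * e T 0 * e T (T u + v) := (inv_e_mul_e_zero_mul_e T _).symm

/-- `e_u e_v = γ(T u, v)⁻¹ e_0 e_{T u + v}` for all `u v ∈ M`. -/
theorem statement4 (T : M ≃+ M) (u v : M) :
    e T u * e T v = (γ T (T u) v)⁻¹ * e T 0 * e T (T u + v) := by
  set z := e T 0
  set X := e T (T u + v)
  have hz : Commute z (e T u * e T v * X⁻¹) :=
    commute_mul_inv_of_inv_mul_mul_eq (conj_e_zero_e_mul_e T u v)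
  rw [γ, e_T_eq_conj]
  calc e T u * e T v = z⁻¹ * z⁻¹ * (z * z * (e T u * e T v * X⁻¹)) * X := by group
    _ = z⁻¹ * z⁻¹ * (e T u * e T v * X⁻¹ * (z * z)) * X := by rw [(hz.mul_left hz).eq]
    _ = (z⁻¹ * X * (e T v)⁻¹ * z * (z⁻¹ * e T u * z)⁻¹ * z)⁻¹ * z * X := by group

end Clauwens
end

section
/- The map λ defined by λ(x,y) = γ(y,x)^{-1} γ(x,y) is additive in its second coordinate: λ(u, a + b) = λ(u, a) · λ(u, b) in Adj(A(M,T)) for all u, a, b ∈ M. Since λ(x,y) = λ(y,x)^{-1}, λ is consequently additive in both coordinates. -/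
/-!
Common setup: the adjoint group of the Alexander quandle `A(M,T)` (F.J.-B.J. Clauwens,
"The adjoint group of an Alexander quandle").

For an abelian group `M` with automorphism `T`, the Alexander quandle `A(M,T)` is `M` with
`y * x = T y + x - T x`, and the adjoint group `Adj(A(M,T))` is presented with generators
`e x` for `x : M` and relations `e (y * x) = (e x)⁻¹ * e y * e x`.
-/

open scoped TensorProduct

namespace Clauwens

variable {M : Type*} [AddCommGroup M]

/-!
With `g x = e₀⁻¹ eₓ`, `γ(x,y) = g(x+y) g(y)⁻¹ g(x)⁻¹` is the defect of additivity of `g`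
and `λ(x,y)` is the commutator `⁅g y, g x⁆`. The defining relations of `Adj` show that
conjugation by `g z` sends `g y` to `g(y + c) g(c)⁻¹` with `c = T⁻¹ z - z`; since `c` depends
additively on `z`, conjugation by `g x g y` and by `g(x+y)` agree on every `g w`, so `γ`
centralizes the subgroup generated by the `g w`. For any map `f` from a commutative additive magma
to a group whose additivity defect centralizes the subgroup generated by `f`, expanding `⁅x y, u⁆`
shows that `(a, u) ↦ ⁅f a, f u⁆` is biadditive.
-/

open scoped commutatorElement

section HomDefect

variable {G A : Type*} [Group G]

lemma commutatorElement_mem {H : Subgroup G} {x y : G} (hx : x ∈ H) (hy : y ∈ H) :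
    ⁅x, y⁆ ∈ H := by
  rw [commutatorElement_def]
  exact mul_mem (mul_mem (mul_mem hx hy) (inv_mem hx)) (inv_mem hy)

lemma apply_mem_closure_range (f : A → G) (x : A) : f x ∈ Subgroup.closure (Set.range f) :=
  Subgroup.subset_closure (Set.mem_range_self x)

variable [AddCommMagma A]

def homDefect (f : A → G) (x y : A) : G := f (x + y) * (f y)⁻¹ * (f x)⁻¹

lemma commutatorElement_eq_homDefect (f : A → G) (u a : A) :
    ⁅f u, f a⁆ = (homDefect f u a)⁻¹ * homDefect f a u := by
  simp only [homDefect, commutatorElement_def, add_comm u a]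
  group

variable {f : A → G} (hf : ∀ x y, homDefect f x y ∈ Subgroup.centralizer (Set.range f))
include hf

lemma homDefect_commute (x y : A) {z : G} (hz : z ∈ Subgroup.closure (Set.range f)) :
    Commute (homDefect f x y) z := by
  have hc := hf x y
  rw [← Subgroup.centralizer_closure, Subgroup.mem_centralizer_iff] at hc
  exact (hc z hz).symm

lemma commutatorElement_commute (u a : A) {z : G} (hz : z ∈ Subgroup.closure (Set.range f)) :
    Commute ⁅f u, f a⁆ z := by
  rw [commutatorElement_eq_homDefect]
  exact (homDefect_commute hf u a hz).inv_left.mul_left (homDefect_commute hf a u hz)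

lemma commutatorElement_map_add_left (a b u : A) :
    ⁅f (a + b), f u⁆ = ⁅f a, f u⁆ * ⁅f b, f u⁆ := by
  have hmem := apply_mem_closure_range f
  have hc : ∀ {z}, z ∈ Subgroup.closure (Set.range f) → Commute (homDefect f a b) z :=
    homDefect_commute hf a b
  have hsplit : f (a + b) = homDefect f a b * (f a * f b) := by
    simp only [homDefect]; group
  calc ⁅f (a + b), f u⁆
      = homDefect f a b * ⁅f a * f b, f u⁆ * (homDefect f a b)⁻¹ * ⁅homDefect f a b, f u⁆ := by
        rw [hsplit, commutatorElement_mul_left_eq_conj_mul]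
    _ = ⁅f a * f b, f u⁆ := by
        rw [(hc (hmem u)).commutator_eq, mul_one,
          (hc (commutatorElement_mem (mul_mem (hmem a) (hmem b)) (hmem u))).mul_inv_cancel]
    _ = f a * ⁅f b, f u⁆ * (f a)⁻¹ * ⁅f a, f u⁆ := commutatorElement_mul_left_eq_conj_mul _ _ _
    _ = ⁅f b, f u⁆ * ⁅f a, f u⁆ := by
        rw [(commutatorElement_commute hf b u (hmem a)).symm.mul_inv_cancel]
    _ = ⁅f a, f u⁆ * ⁅f b, f u⁆ :=
        (commutatorElement_commute hf b u (commutatorElement_mem (hmem a) (hmem u))).eq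

lemma commutatorElement_map_add_right (u a b : A) :
    ⁅f u, f (a + b)⁆ = ⁅f u, f a⁆ * ⁅f u, f b⁆ := by
  rw [← commutatorElement_inv, commutatorElement_map_add_left hf, mul_inv_rev,
    commutatorElement_inv, commutatorElement_inv]
  exact (commutatorElement_commute hf u b
    (commutatorElement_mem (apply_mem_closure_range f u) (apply_mem_closure_range f a))).eq

end HomDefect

section AdjointGroup

variable (T : M ≃+ M)

lemma e_conj (x y : M) : (e T x)⁻¹ * e T y * e T x = e T (T y + x - T x) := by
  have h : PresentedGroup.mk (rels T) (FreeGroup.of (T y + x - T x))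
      = PresentedGroup.mk (rels T) ((FreeGroup.of x)⁻¹ * FreeGroup.of y * FreeGroup.of x) :=
    PresentedGroup.mk_eq_mk_of_mul_inv_mem ⟨x, y, rfl⟩
  rw [map_mul, map_mul, map_inv] at h
  exact h.symm

lemma e_zero_conj (y : M) : (e T 0)⁻¹ * e T y * e T 0 = e T (T y) := by
  simpa using e_conj T 0 y

def g (x : M) : Adj T := (e T 0)⁻¹ * e T x

lemma g_conj (z y : M) :
    (g T z)⁻¹ * g T y * g T z = g T (y + (T.symm z - z)) * (g T (T.symm z - z))⁻¹ := by
  calc (g T z)⁻¹ * g T y * g T z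
      = ((e T z)⁻¹ * e T y * e T z) * ((e T z)⁻¹ * e T 0 * e T z)⁻¹ := by
        simp only [g]; group
    _ = e T (T (y + (T.symm z - z))) * (e T (T (T.symm z - z)))⁻¹ := by
        simp only [e_conj, map_add, map_sub, AddEquiv.apply_symm_apply, map_zero, zero_add,
          add_sub_assoc]
    _ = ((e T 0)⁻¹ * e T (y + (T.symm z - z)) * e T 0) *
          ((e T 0)⁻¹ * e T (T.symm z - z) * e T 0)⁻¹ := by
        rw [e_zero_conj, e_zero_conj]
    _ = g T (y + (T.symm z - z)) * (g T (T.symm z - z))⁻¹ := by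
        simp only [g]; group

lemma g_conj_g_conj (x y w : M) :
    (g T y)⁻¹ * ((g T x)⁻¹ * g T w * g T x) * g T y
      = (g T (x + y))⁻¹ * g T w * g T (x + y) := by
  have hsplit : ∀ p q : Adj T, (g T y)⁻¹ * (p * q⁻¹) * g T y
      = ((g T y)⁻¹ * p * g T y) * ((g T y)⁻¹ * q * g T y)⁻¹ := fun p q => by group
  rw [g_conj, hsplit, g_conj, g_conj, g_conj, map_add]
  simp only [add_sub_add_comm, ← add_assoc]
  group

lemma homDefect_g_mem_centralizer (x y : M) :
    homDefect (g T) x y ∈ Subgroup.centralizer (Set.range (g T)) := by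
  rintro _ ⟨w, rfl⟩
  have h := g_conj_g_conj T x y w
  simp only [homDefect]
  calc g T w * (g T (x + y) * (g T y)⁻¹ * (g T x)⁻¹)
      = g T (x + y) * ((g T (x + y))⁻¹ * g T w * g T (x + y)) * (g T x * g T y)⁻¹ := by
        group
    _ = g T (x + y) * (g T y)⁻¹ * (g T x)⁻¹ * g T w := by
        rw [← h]; group

lemma lam_eq_commutatorElement (x y : M) : lam T x y = ⁅g T y, g T x⁆ := by
  rw [commutatorElement_eq_homDefect, lam]
  rfl

end AdjointGroup

/-- `λ` is additive in its second coordinate: `λ(u, a+b) = λ(u,a) λ(u,b)`; since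
`λ(x,y) = λ(y,x)⁻¹`, it is consequently additive in both coordinates. -/
theorem statement7 (T : M ≃+ M) :
    (∀ u a b : M, lam T u (a + b) = lam T u a * lam T u b) ∧
    (∀ x y : M, lam T x y = (lam T y x)⁻¹) ∧
    (∀ a b u : M, lam T (a + b) u = lam T a u * lam T b u) := by
  have hg := homDefect_g_mem_centralizer T
  refine ⟨fun u a b => ?_, fun x y => ?_, fun a b u => ?_⟩ <;>
    simp only [lam_eq_commutatorElement]
  · exact commutatorElement_map_add_left hg a b u
  · exact (commutatorElement_inv _ _).symm
  · exact commutatorElement_map_add_right hg u a b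

end Clauwens
end

section
/- Assume that 1 − T : M → M is invertible, and let φ : Adj(A(M,T)) → F(M,T) be the isomorphism with φ(e_x) = (1, x, 0). Then the unique homomorphism ε : Adj(A(M,T)) → ℤ with ε(e_x) = 1 for all x corresponds under φ to the projection (k, x, α) ↦ k; consequently φ restricts to an isomorphism from the kernel Adj(A(M,T))^o of ε onto the subgroup F(M,T)^o = {(0, x, α) : x ∈ M, α ∈ S(M,T)}, on which the multiplication is (0, x, α)(0, y, β) = (0, x + y, α + β + [x ⊗ y]). -/
/-!
Common setup: the adjoint group of the Alexander quandle `A(M,T)` (F.J.-B.J. Clauwens,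
"The adjoint group of an Alexander quandle").

For an abelian group `M` with automorphism `T`, the Alexander quandle `A(M,T)` is `M` with
`y * x = T y + x - T x`, and the adjoint group `Adj(A(M,T))` is presented with generators
`e x` for `x : M` and relations `e (y * x) = (e x)⁻¹ * e y * e x`.
-/

open scoped TensorProduct

namespace Clauwens

variable {M : Type*} [AddCommGroup M]

/-!
Put `b x = e₀⁻¹ eₓ` and `c x y = b x * b y * (b (x + y))⁻¹`. The quandle relations say that
conjugation by `b x` sends `b y` to `(b u)⁻¹ * b (u + y)` with `u = x - T x`; as this is additive
in `u`, conjugating by `b x * b x'` and by `b (x + x')` agree, so every `c x y` commutes with all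
`b w`, and conjugation by `b x` multiplies `b y` by `(c (x - T x) y)⁻¹`. Since `1 - T` is onto,
this makes `c` additive in the first variable and gives `c (T y) x = c x y`, i.e. `c` is
`τ`-invariant; as conjugation by `e₀` turns `c x y` into `c (T x) (T y)`, `c` is central.
So `c` induces a homomorphism `ζ : S(M,T) → Z(Adj)`, and `(k, x, α) ↦ e₀ ^ k * b x * ζ α` is a
homomorphism `F(M,T) → Adj(A(M,T))` left inverse to `φ`. Hence `φ` is injective, and it maps
`ker ε` onto `F(M,T)⁰` because `ε` is the first coordinate of `φ`.
-/

lemma commute_mul_inv_of_conj_eq {G : Type*} [Group G] {g g' h : G}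
    (H : g⁻¹ * h * g = g'⁻¹ * h * g') : Commute (g * g'⁻¹) h :=
  calc g * g'⁻¹ * h = g * (g'⁻¹ * h * g') * g'⁻¹ := by group
    _ = h * (g * g'⁻¹) := by rw [← H]; group

section Generators

variable (T : M ≃+ M)

lemma e_rel (x y : M) : e T (T y + x - T x) = (e T x)⁻¹ * e T y * e T x := by
  have h := PresentedGroup.mk_eq_mk_of_mul_inv_mem (rels := rels T) ⟨x, y, rfl⟩
  simp only [map_mul, map_inv] at h
  exact h

def b (x : M) : Adj T := (e T 0)⁻¹ * e T x

def c (x y : M) : Adj T := b T x * b T y * (b T (x + y))⁻¹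

lemma e_eq_mul_b (x : M) : e T x = e T 0 * b T x := (mul_inv_cancel_left _ _).symm

lemma b_add (x y : M) : b T (x + y) = (c T x y)⁻¹ * (b T x * b T y) := by
  rw [c]; group

lemma conj_e_zero_b (y : M) : (e T 0)⁻¹ * b T y * e T 0 = b T (T y) := by
  have h := e_rel T 0 y
  simp only [map_zero, add_zero, sub_zero] at h
  rw [b, b, h]; group

lemma b_mul_e_zero (y : M) : b T y * e T 0 = e T 0 * b T (T y) := by
  rw [← conj_e_zero_b]; group

lemma b_conj (x y : M) :
    (b T x)⁻¹ * b T y * b T x = (b T (x - T x))⁻¹ * b T (x - T x + y) := by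
  obtain ⟨y, rfl⟩ := T.surjective y
  have h₀ := e_rel T 0 y
  have h₁ := e_rel T x 0
  simp only [map_zero, add_zero, sub_zero, zero_add] at h₀ h₁
  rw [show x - T x + T y = T y + x - T x by abel, b, b, b, b, h₀, h₁, e_rel]
  group

lemma conj_b_mul_b (x x' w : M) :
    (b T x * b T x')⁻¹ * b T w * (b T x * b T x')
      = (b T (x + x'))⁻¹ * b T w * b T (x + x') := by
  have hsum : x + x' - T (x + x') = x' - T x' + (x - T x) := by rw [map_add]; abel
  calc (b T x * b T x')⁻¹ * b T w * (b T x * b T x')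
      = (b T x')⁻¹ * ((b T x)⁻¹ * b T w * b T x) * b T x' := by group
    _ = ((b T x')⁻¹ * b T (x - T x) * b T x')⁻¹
          * ((b T x')⁻¹ * b T (x - T x + w) * b T x') := by
        rw [b_conj T x w]; group
    _ = (b T (x + x'))⁻¹ * b T w * b T (x + x') := by
        rw [b_conj T x' (x - T x), b_conj T x' (x - T x + w), b_conj T (x + x') w, hsum, add_assoc]
        group

lemma c_commute_b (x y w : M) : Commute (c T x y) (b T w) :=
  commute_mul_inv_of_conj_eq (conj_b_mul_b T x y w)

lemma c_commute_c (x y x' y' : M) : Commute (c T x y) (c T x' y') :=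
  ((c_commute_b T x y x').mul_right (c_commute_b T x y y')).mul_right
    (c_commute_b T x y (x' + y')).inv_right

lemma b_mul_b (x y : M) : b T x * b T y = b T (x + y) * c T x y := by
  rw [← (c_commute_b T x y (x + y)).eq, b_add]; group

lemma b_conj_eq_c_sub (x y : M) :
    (b T x)⁻¹ * b T y * b T x = (c T (x - T x) y)⁻¹ * b T y := by
  rw [b_conj, b_add, ← mul_assoc, ← mul_assoc,
    (c_commute_b T _ y _).inv_left.symm.inv_mul_cancel]

lemma b_conj_eq_c_mul_c_swap_inv (x y : M) :
    (b T y)⁻¹ * b T x * b T y = c T x y * (c T y x)⁻¹ * b T x := by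
  have hxy : b T x * b T y = c T x y * (c T y x)⁻¹ * (b T y * b T x) := by
    rw [c, c, add_comm y x]; group
  have hk : Commute (b T y) (c T x y * (c T y x)⁻¹) :=
    ((c_commute_b T x y y).mul_left (c_commute_b T y x y).inv_left).symm
  calc (b T y)⁻¹ * b T x * b T y
        = (b T y)⁻¹ * (c T x y * (c T y x)⁻¹) * b T y * b T x := by
        rw [mul_assoc _ (b T x), hxy]; group
    _ = c T x y * (c T y x)⁻¹ * b T x := by rw [hk.inv_mul_cancel]

lemma c_sub_T_left (y x : M) : c T (y - T y) x = c T y x * (c T x y)⁻¹ := by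
  have h := (b_conj_eq_c_sub T y x).symm.trans (b_conj_eq_c_mul_c_swap_inv T x y)
  rw [mul_left_inj, inv_eq_iff_eq_inv] at h
  rw [h, mul_inv_rev, inv_inv]

end Generators

section Central

variable (T : M ≃+ M)

lemma c_add_left (hT : Function.Surjective fun x : M => x - T x) (u u' y : M) :
    c T (u + u') y = c T u y * c T u' y := by
  obtain ⟨x, rfl⟩ : ∃ x, x - T x = u := hT u
  obtain ⟨x', rfl⟩ : ∃ x', x' - T x' = u' := hT u'
  have hsum : x + x' - T (x + x') = x - T x + (x' - T x') := by rw [map_add]; abel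
  have h : (c T (x - T x + (x' - T x')) y)⁻¹ * b T y
      = (c T (x - T x) y)⁻¹ * (c T (x' - T x') y)⁻¹ * b T y :=
    calc (c T (x - T x + (x' - T x')) y)⁻¹ * b T y
        = (b T x * b T x')⁻¹ * b T y * (b T x * b T x') := by
          rw [conj_b_mul_b, b_conj_eq_c_sub, hsum]
      _ = (b T x')⁻¹ * ((b T x)⁻¹ * b T y * b T x) * b T x' := by group
      _ = ((b T x')⁻¹ * (c T (x - T x) y)⁻¹ * b T x') * ((b T x')⁻¹ * b T y * b T x') := by
          rw [b_conj_eq_c_sub]; group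
      _ = (c T (x - T x) y)⁻¹ * (c T (x' - T x') y)⁻¹ * b T y := by
          rw [(c_commute_b T _ y x').inv_left.symm.inv_mul_cancel, b_conj_eq_c_sub]; group
  rw [mul_left_inj, ← mul_inv_rev, inv_inj] at h
  rw [h, (c_commute_c T _ _ _ _).eq]

lemma c_T_left (hT : Function.Surjective fun x : M => x - T x) (x y : M) :
    c T (T y) x = c T x y := by
  have h := c_add_left T hT (y - T y) (T y) x
  rw [sub_add_cancel, c_sub_T_left, mul_assoc, left_eq_mul, inv_mul_eq_one] at h
  exact h.symm

lemma c_T_T (hT : Function.Surjective fun x : M => x - T x) (x y : M) :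
    c T (T x) (T y) = c T x y := by
  rw [c_T_left T hT, c_T_left T hT]

lemma c_add_right (hT : Function.Surjective fun x : M => x - T x) (x y y' : M) :
    c T x (y + y') = c T x y * c T x y' := by
  rw [← c_T_left T hT, map_add, c_add_left T hT, c_T_left T hT, c_T_left T hT]

lemma conj_e_zero_c (x y : M) : (e T 0)⁻¹ * c T x y * e T 0 = c T (T x) (T y) := by
  simp only [c]
  rw [← map_add T x y, ← conj_e_zero_b, ← conj_e_zero_b, ← conj_e_zero_b]
  group

lemma c_commute_e_zero (hT : Function.Surjective fun x : M => x - T x) (x y : M) :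
    Commute (c T x y) (e T 0) :=
  calc c T x y * e T 0 = e T 0 * ((e T 0)⁻¹ * c T x y * e T 0) := by group
    _ = e T 0 * c T x y := by rw [conj_e_zero_c, c_T_T T hT]

lemma c_mem_center (hT : Function.Surjective fun x : M => x - T x) (x y : M) :
    c T x y ∈ Subgroup.center (Adj T) := by
  have hgen (z : M) : e T z ∈ Subgroup.centralizer {c T x y} := by
    rw [Subgroup.mem_centralizer_singleton_iff, e_eq_mul_b]
    exact ((c_commute_e_zero T hT x y).mul_right (c_commute_b T x y z)).eq.symm
  exact Subgroup.mem_center_iff.mpr fun g ↦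
    Subgroup.mem_centralizer_singleton_iff.mp (PresentedGroup.generated_by _ _ hgen g)

end Central

section Splitting

open scoped IsMulCommutative

variable (T : M ≃+ M) (hT : Function.Surjective fun x : M => x - T x)

noncomputable def cBilin : M →+ M →+ Additive (Subgroup.center (Adj T)) :=
  AddMonoidHom.mk'
    (fun x ↦ AddMonoidHom.mk' (fun y ↦ Additive.ofMul ⟨c T x y, c_mem_center T hT x y⟩)
      fun y y' ↦ congrArg Additive.ofMul (Subtype.ext (c_add_right T hT x y y')))
    fun x x' ↦ by ext y; exact c_add_left T hT x x' y

noncomputable def cTensor : M ⊗[ℤ] M →+ Additive (Subgroup.center (Adj T)) :=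
  TensorProduct.liftAddHom (cBilin T hT) fun r m n ↦ by
    rw [map_zsmul, AddMonoidHom.smul_apply, map_zsmul]

lemma cTensor_tmul (x y : M) :
    cTensor T hT (x ⊗ₜ[ℤ] y) = Additive.ofMul ⟨c T x y, c_mem_center T hT x y⟩ :=
  TensorProduct.liftAddHom_tmul _ _ x y

lemma cTensor_τmap (w : M ⊗[ℤ] M) : cTensor T hT (τmap T w) = cTensor T hT w := by
  induction w using TensorProduct.induction_on with
  | zero => rw [map_zero, map_zero]
  | tmul x y =>
      rw [τmap_tmul, cTensor_tmul, cTensor_tmul]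
      exact congrArg Additive.ofMul (Subtype.ext (c_T_left T hT x y))
  | add w w' hw hw' => rw [map_add, map_add, map_add, hw, hw']

noncomputable def cLift : S T →ₗ[ℤ] Additive (Subgroup.center (Adj T)) :=
  Submodule.liftQ _ (cTensor T hT).toIntLinearMap <| by
    rintro _ ⟨v, rfl⟩
    rw [LinearMap.mem_ker]
    simp [cTensor_τmap]

noncomputable def ζ (α : S T) : Adj T :=
  (Additive.toMul (cLift T hT α) : Subgroup.center (Adj T))

lemma ζ_cls (x y : M) : ζ T hT (cls T x y) = c T x y := by
  simp [ζ, cLift, cls, cTensor_tmul]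

lemma ζ_add (α β : S T) : ζ T hT (α + β) = ζ T hT α * ζ T hT β := by
  simp [ζ]

lemma ζ_zero : ζ T hT 0 = 1 := by
  simp [ζ]

lemma ζ_commute (α : S T) (g : Adj T) : Commute (ζ T hT α) g :=
  (Subgroup.mem_center_iff.mp (Additive.toMul (cLift T hT α)).2 g).symm

end Splitting

section Inverse

variable (T : M ≃+ M)

lemma Tz_succ (m : ℤ) (x : M) : Tz T (m + 1) x = T (Tz T m x) := by
  rw [add_comm, Tz_add, Tz_one]

lemma b_mul_zpow (m : ℤ) (x : M) : b T x * e T 0 ^ m = e T 0 ^ m * b T (Tz T m x) := by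
  induction m using Int.induction_on generalizing x with
  | zero => rw [zpow_zero, one_mul, mul_one, Tz_zero]
  | succ m ih => rw [zpow_add_one, ← mul_assoc, ih, mul_assoc, b_mul_e_zero, Tz_succ, mul_assoc]
  | pred m ih =>
      have h := ih x
      rw [show -(m : ℤ) = -m - 1 + 1 by ring, zpow_add_one, Tz_succ, mul_assoc (e T 0 ^ _),
        ← b_mul_e_zero, ← mul_assoc, ← mul_assoc] at h
      exact mul_right_cancel h

variable (hT : Function.Surjective fun x : M => x - T x)

noncomputable def χ : F T →* Adj T :=
  MonoidHom.mk' (fun g ↦ e T 0 ^ g.1 * b T g.2.1 * ζ T hT g.2.2) <| by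
    rintro ⟨k, x, α⟩ ⟨m, y, β⟩
    show e T 0 ^ (k + m) * b T (Tz T m x + y) * ζ T hT (α + β + cls T (Tz T m x) y)
      = e T 0 ^ k * b T x * ζ T hT α * (e T 0 ^ m * b T y * ζ T hT β)
    calc e T 0 ^ (k + m) * b T (Tz T m x + y) * ζ T hT (α + β + cls T (Tz T m x) y)
        = e T 0 ^ (k + m) * (b T (Tz T m x + y) * c T (Tz T m x) y)
            * (ζ T hT α * ζ T hT β) := by
          rw [ζ_add, ζ_add, ζ_cls,
            ((ζ_commute T hT α (c T _ y)).mul_left (ζ_commute T hT β _)).eq]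
          group
      _ = e T 0 ^ k * (b T x * e T 0 ^ m) * b T y * (ζ T hT α * ζ T hT β) := by
          rw [← b_mul_b, b_mul_zpow, zpow_add]; group
      _ = e T 0 ^ k * b T x * (e T 0 ^ m * b T y * ζ T hT α) * ζ T hT β := by group
      _ = e T 0 ^ k * b T x * ζ T hT α * (e T 0 ^ m * b T y * ζ T hT β) := by
          rw [← (ζ_commute T hT α _).eq]; group

lemma χ_mk_one (x : M) : χ T hT (1, x, 0) = e T x := by
  show e T 0 ^ (1 : ℤ) * b T x * ζ T hT 0 = e T x
  rw [zpow_one, ζ_zero, mul_one, ← e_eq_mul_b]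

end Inverse

section FGroup

variable (T : M ≃+ M)

lemma F_mul_def (k m : ℤ) (x y : M) (α β : S T) :
    ((k, x, α) : F T) * (m, y, β) = (k + m, Tz T m x + y, α + β + cls T (Tz T m x) y) :=
  rfl

lemma mk_zero_mul_mk_zero (x y : M) (α β : S T) :
    ((0, x, α) : F T) * (0, y, β) = (0, x + y, α + β + cls T x y) := by
  rw [F_mul_def, add_zero, Tz_zero]

lemma mk_int_mul_mk_int (k m : ℤ) : ((k, 0, 0) : F T) * (m, 0, 0) = (k + m, 0, 0) := by
  simp [F_mul_def, cls_zero_right]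

lemma mk_one_zpow (k : ℤ) : ((1, 0, 0) : F T) ^ k = (k, 0, 0) := by
  induction k using Int.induction_on with
  | zero => rfl
  | succ k ih => rw [zpow_add_one, ih, mk_int_mul_mk_int]
  | pred k ih => rw [zpow_sub_one, ih, mul_inv_eq_iff_eq_mul, mk_int_mul_mk_int, sub_add_cancel]

noncomputable def degree : F T →* Multiplicative ℤ :=
  MonoidHom.mk' (fun g ↦ Multiplicative.ofAdd g.1) fun _ _ ↦ rfl

end FGroup

section Isomorphism

variable (T : M ≃+ M) (φ : Adj T →* F T)

lemma ε_eq_degree_comp (hφ : ∀ x, φ (e T x) = (1, x, 0)) :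
    ε T = (degree T).comp φ :=
  PresentedGroup.ext fun x ↦ by
    show ε T (e T x) = degree T (φ (e T x))
    rw [hφ]
    rfl

lemma mem_ker_ε_iff (hφ : ∀ x, φ (e T x) = (1, x, 0)) (g : Adj T) :
    g ∈ (ε T).ker ↔ φ g ∈ Fo T := by
  rw [MonoidHom.mem_ker, ε_eq_degree_comp T φ hφ]
  exact ofAdd_eq_one (x := (φ g).1)

lemma φ_b (hφ : ∀ x, φ (e T x) = (1, x, 0)) (x : M) : φ (b T x) = (0, x, 0) := by
  rw [b, map_mul, map_inv, hφ, hφ, inv_mul_eq_iff_eq_mul, F_mul_def]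
  simp [cls_zero_left]

lemma φ_c (hφ : ∀ x, φ (e T x) = (1, x, 0)) (x y : M) :
    φ (c T x y) = (0, 0, cls T x y) := by
  rw [c, map_mul, map_mul, map_inv, φ_b T φ hφ, φ_b T φ hφ, φ_b T φ hφ,
    mul_inv_eq_iff_eq_mul, mk_zero_mul_mk_zero, mk_zero_mul_mk_zero]
  simp [cls_zero_left]

lemma χ_comp_φ (hT : Function.Surjective fun x : M => x - T x)
    (hφ : ∀ x, φ (e T x) = (1, x, 0)) :
    (χ T hT).comp φ = MonoidHom.id (Adj T) :=
  PresentedGroup.ext fun x ↦ by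
    show χ T hT (φ (e T x)) = e T x
    rw [hφ, χ_mk_one]

lemma φ_ζ (hT : Function.Surjective fun x : M => x - T x)
    (hφ : ∀ x, φ (e T x) = (1, x, 0)) (α : S T) :
    φ (ζ T hT α) = (0, 0, α) := by
  induction α using Submodule.Quotient.induction_on with | H w => ?_
  induction w using TensorProduct.induction_on with
  | zero => rw [Submodule.Quotient.mk_zero, ζ_zero, map_one]; rfl
  | tmul x y => exact (ζ_cls T hT x y).symm ▸ φ_c T φ hφ x y
  | add w w' hw hw' =>
      rw [Submodule.Quotient.mk_add, ζ_add, map_mul, hw, hw', mk_zero_mul_mk_zero]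
      simp [cls_zero_left]

lemma φ_χ (hT : Function.Surjective fun x : M => x - T x)
    (hφ : ∀ x, φ (e T x) = (1, x, 0)) (f : F T) :
    φ (χ T hT f) = f := by
  obtain ⟨k, x, α⟩ := f
  show φ (e T 0 ^ k * b T x * ζ T hT α) = (k, x, α)
  rw [map_mul, map_mul, map_zpow, hφ, φ_b T φ hφ, φ_ζ T φ hT hφ, mk_one_zpow, F_mul_def,
    F_mul_def]
  simp [Tz_zero, cls_zero_left, cls_zero_right]

lemma map_ker_ε (hT : Function.Surjective fun x : M => x - T x)
    (hφ : ∀ x, φ (e T x) = (1, x, 0)) :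
    (ε T).ker.map φ = Fo T := by
  ext f
  constructor
  · rintro ⟨g, hg, rfl⟩
    exact (mem_ker_ε_iff T φ hφ g).1 hg
  · intro hf
    refine ⟨χ T hT f, (mem_ker_ε_iff T φ hφ _).2 ?_, φ_χ T φ hT hφ f⟩
    rwa [φ_χ T φ hT hφ]

end Isomorphism

/-- If `1 - T` is invertible and `φ : Adj(A(M,T)) → F(M,T)` is the isomorphism with
`φ(e_x) = (1, x, 0)`, then the unique homomorphism `ε : Adj(A(M,T)) → ℤ` with `ε(e_x) = 1`
corresponds under `φ` to `(k, x, α) ↦ k`; consequently `φ` restricts to an isomorphism of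
`Adj(A(M,T))⁰ = ker ε` onto `F(M,T)⁰ = {(0, x, α)}`, whose multiplication is
`(0, x, α)(0, y, β) = (0, x + y, α + β + [x ⊗ y])`. -/
theorem statement14 (T : M ≃+ M) (hT : Function.Bijective fun x : M => x - T x)
    (φ : Adj T →* F T) (hφ : ∀ x : M, φ (e T x) = (((1 : ℤ), x, (0 : S T)) : F T)) :
    (∀ g : Adj T, ε T g = Multiplicative.ofAdd (φ g).1) ∧
    (∀ g : Adj T, g ∈ (ε T).ker ↔ φ g ∈ Fo T) ∧
    (∃ ψ : (ε T).ker ≃* Fo T, ∀ g : (ε T).ker, (ψ g : F T) = φ (g : Adj T)) ∧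
    (∀ (x y : M) (α β : S T),
      ((((0 : ℤ), x, α) : F T) * (((0 : ℤ), y, β) : F T))
        = (((0 : ℤ), x + y, α + β + cls T x y) : F T)) := by
  have hinj : Function.Injective φ :=
    Function.LeftInverse.injective (g := χ T hT.2) (DFunLike.congr_fun (χ_comp_φ T φ hT.2 hφ))
  refine ⟨DFunLike.congr_fun (ε_eq_degree_comp T φ hφ), mem_ker_ε_iff T φ hφ, ?_,
    mk_zero_mul_mk_zero T⟩
  exact ⟨((ε T).ker.equivMapOfInjective φ hinj).trans
    (MulEquiv.subgroupCongr (map_ker_ε T φ hT.2 hφ)), fun _ ↦ rfl⟩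

end Clauwens
end
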